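/- The joint tensor algebra T(U,V) equipped with the square product a □ b = Σ_{(a),(b)} (a₍₁₎ | b₍₁₎) a₍₂₎·b₍₂₎ is a unital associative algebra: (a □ b) □ c = a □ (b □ c) for all a, b, c ∈ T(U,V), and the ordinary unit 1⊗1 satisfies (1⊗1) □ a = a □ (1⊗1) = a. -/

import Mathlib

open TensorProduct

noncomputable section

variable (K : Type) [Field K] [CharZero K]
variable (U V : Type) [AddCommGroup U] [Module K U] [AddCommGroup V] [Module K V]

/-- The comultiplication of the tensor algebra, the algebra homomorphism with
`Δ(x) = 1 ⊗ x + x ⊗ 1` for `x ∈ U`. -/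
def TAcomul : TensorAlgebra K U →ₐ[K] TensorAlgebra K U ⊗[K] TensorAlgebra K U :=
  TensorAlgebra.lift K
    ((TensorProduct.mk K (TensorAlgebra K U) (TensorAlgebra K U) 1
      + (TensorProduct.mk K (TensorAlgebra K U) (TensorAlgebra K U)).flip 1) ∘ₗ TensorAlgebra.ι K)

/-- The joint tensor algebra `T(U,V) = T(U) ⊗ T(V)`. -/
abbrev JT := TensorAlgebra K U ⊗[K] TensorAlgebra K V

/-- The comultiplication of the joint tensor algebra (tensor product Hopf structure). -/
def JTcomul : JT K U V →ₗ[K] JT K U V ⊗[K] JT K U V :=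
  (TensorProduct.tensorTensorTensorComm K (TensorAlgebra K U) (TensorAlgebra K U)
      (TensorAlgebra K V) (TensorAlgebra K V)).toLinearMap ∘ₗ
    TensorProduct.map (TAcomul K U).toLinearMap (TAcomul K V).toLinearMap

/-- `a ↦ a ⊗ 1 : T(U) → T(U,V)`. -/
def inclU : TensorAlgebra K U →ₗ[K] JT K U V :=
  (TensorProduct.mk K (TensorAlgebra K U) (TensorAlgebra K V)).flip 1

/-- `b ↦ 1 ⊗ b : T(V) → T(U,V)`. -/
def inclV : TensorAlgebra K V →ₗ[K] JT K U V :=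
  TensorProduct.mk K (TensorAlgebra K U) (TensorAlgebra K V) 1

variable (B : U →ₗ[K] V →ₗ[K] K)

/-- A Laplace pairing on the joint tensor algebra `T(U,V)`, compatible with the duality `B`:
a symmetric bilinear form satisfying `(a | bc) = Σ (a₍₁₎ | b) (a₍₂₎ | c)` together with the
compatibility conditions on generators. -/
structure IsLaplacePairing (Lp : JT K U V →ₗ[K] JT K U V →ₗ[K] K) : Prop where
  symm : ∀ a b, Lp a b = Lp b a
  split : ∀ a b c, Lp a (b * c)
    = TensorProduct.lift ((LinearMap.mul K K).compl₁₂ (Lp.flip b) (Lp.flip c)) (JTcomul K U V a)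
  unit_unit : Lp 1 1 = 1
  vu : ∀ (x : U) (y : V),
    Lp (inclV K U V (TensorAlgebra.ι K y)) (inclU K U V (TensorAlgebra.ι K x)) = B x y
  uv : ∀ (x : U) (y : V),
    Lp (inclU K U V (TensorAlgebra.ι K x)) (inclV K U V (TensorAlgebra.ι K y)) = B x y
  uu : ∀ x₁ x₂ : U,
    Lp (inclU K U V (TensorAlgebra.ι K x₁)) (inclU K U V (TensorAlgebra.ι K x₂)) = 0
  vv : ∀ y₁ y₂ : V,
    Lp (inclV K U V (TensorAlgebra.ι K y₁)) (inclV K U V (TensorAlgebra.ι K y₂)) = 0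
  u_one : ∀ x : U, Lp (inclU K U V (TensorAlgebra.ι K x)) 1 = 0
  one_u : ∀ x : U, Lp 1 (inclU K U V (TensorAlgebra.ι K x)) = 0
  one_v : ∀ y : V, Lp 1 (inclV K U V (TensorAlgebra.ι K y)) = 0
  v_one : ∀ y : V, Lp (inclV K U V (TensorAlgebra.ι K y)) 1 = 0

/-- Auxiliary map sending `(a₁ ⊗ a₂) ⊗ (b₁ ⊗ b₂)` to `(a₁ | b₁) a₂ · b₂`. -/
def sqAux (Lp : JT K U V →ₗ[K] JT K U V →ₗ[K] K) :
    (JT K U V ⊗[K] JT K U V) ⊗[K] (JT K U V ⊗[K] JT K U V) →ₗ[K] JT K U V :=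
  (TensorProduct.lid K (JT K U V)).toLinearMap ∘ₗ
    TensorProduct.map (TensorProduct.lift Lp)
      (TensorProduct.lift (LinearMap.mul K (JT K U V))) ∘ₗ
    (TensorProduct.tensorTensorTensorComm K (JT K U V) (JT K U V)
      (JT K U V) (JT K U V)).toLinearMap

/-- The square product `a □ b = Σ (a₍₁₎ | b₍₁₎) a₍₂₎ · b₍₂₎` on the joint tensor algebra. -/
def sqProd (Lp : JT K U V →ₗ[K] JT K U V →ₗ[K] K) :
    JT K U V →ₗ[K] JT K U V →ₗ[K] JT K U V :=
  (TensorProduct.curry (sqAux K U V Lp)).compl₁₂ (JTcomul K U V) (JTcomul K U V)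

/-!
Write `Σ x₁ ⊗ x₂ ⊗ x₃` for the iterated coproduct of `x`. Since the coproduct is multiplicative,
`(a □ b) □ c = Σ (a₁|b₁)(a₂b₂|c₁) a₃b₃c₂` and `a □ (b □ c) = Σ (b₁|c₁)(a₁|b₂c₂) a₂b₃c₃`.
Expanding `(a₂b₂|c₁)` and `(a₁|b₂c₂)` by the Laplace identities turns both into
`Σ (a₁|b₁)(a₂|c₁)(b₂|c₂) a₃b₃c₃`, the second one only after exchanging the first two Sweedler
factors of `b` and of `c`, which cocommutativity permits. The unit laws are counitality once
`(1|a) = ε(a)`, and on `T(U,V)` this holds because `a ↦ (1|a)` and `ε` are algebra maps that vanish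
on the generators.
-/

namespace TensorAlgebra

variable (R M : Type*) [CommSemiring R] [AddCommMonoid M] [Module R M]

instance instBialgebra : Bialgebra R (TensorAlgebra R M) :=
  .ofAlgHom
    (lift R <| (TensorProduct.mk R _ _ 1 + (TensorProduct.mk R _ _).flip 1) ∘ₗ ι R)
    algebraMapInv
    (by
      ext x
      simp [Algebra.TensorProduct.one_def, TensorProduct.add_tmul, TensorProduct.tmul_add]
      abel)
    (by ext x; simp [algebraMapInv])
    (by ext x; simp [algebraMapInv])

variable {R M}

@[simp]
theorem comul_ι (x : M) :
    Coalgebra.comul (R := R) (ι R x) = 1 ⊗ₜ[R] ι R x + ι R x ⊗ₜ[R] 1 :=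
  lift_ι_apply _ x

@[simp]
theorem counit_ι (x : M) : Coalgebra.counit (R := R) (ι R x) = 0 := by
  simp [Coalgebra.counit, algebraMapInv]

instance instIsCocomm : Coalgebra.IsCocomm R (TensorAlgebra R M) where
  comm_comp_comul := by
    have h : (Algebra.TensorProduct.comm R (TensorAlgebra R M)
          (TensorAlgebra R M)).toAlgHom.comp (Bialgebra.comulAlgHom R _) =
        Bialgebra.comulAlgHom R (TensorAlgebra R M) := by
      ext x
      simp [add_comm]
    exact congr(($h).toLinearMap)

theorem linearMap_tensorProduct_eq_counit {N : Type*} [AddCommMonoid N] [Module R N]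
    (f : TensorAlgebra R M ⊗[R] TensorAlgebra R N →ₗ[R] R) (h_one : f 1 = 1)
    (h_mul : ∀ x y, f (x * y) = f x * f y) (hM : ∀ m, f (ι R m ⊗ₜ 1) = 0)
    (hN : ∀ n, f (1 ⊗ₜ ι R n) = 0) :
    f = Coalgebra.counit := by
  have h : AlgHom.ofLinearMap f h_one h_mul = Bialgebra.counitAlgHom R _ := by
    ext <;> simp [hM, hN]
  exact congr(($h).toLinearMap)

end TensorAlgebra

namespace Coalgebra

variable {R C : Type*} [CommSemiring R] [AddCommMonoid C] [Module R C] [Coalgebra R C]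
  [IsCocomm R C]

theorem leftComm_lTensor_comul_comul (c : C) :
    leftComm R C C C (comul.lTensor C (comul c)) = comul.lTensor C (comul c) := by
  have h : (leftComm R C C C).toLinearMap ∘ₗ (_root_.TensorProduct.assoc R C C C).toLinearMap =
      (_root_.TensorProduct.assoc R C C C).toLinearMap ∘ₗ
        (TensorProduct.comm R C C).toLinearMap.rTensor C := by
    ext; rfl
  rw [← coassoc_apply]
  simpa [← LinearMap.rTensor_comp_apply] using congr($h (comul.rTensor C (comul c)))

end Coalgebra

namespace LinearMap

section Pairing

variable {R E : Type*} [CommSemiring R] [AddCommMonoid E] [Module R E] (P : E →ₗ[R] E →ₗ[R] R)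

def pairingTmul (M N : Type*) [AddCommMonoid M] [Module R M] [AddCommMonoid N] [Module R N] :
    (E ⊗[R] M) ⊗[R] (E ⊗[R] N) →ₗ[R] M ⊗[R] N :=
  (TensorProduct.lid R (M ⊗[R] N)).toLinearMap ∘ₗ rTensor (M ⊗[R] N) (lift P) ∘ₗ
    (tensorTensorTensorComm R E M E N).toLinearMap

@[simp]
theorem pairingTmul_tmul {M N : Type*} [AddCommMonoid M] [Module R M] [AddCommMonoid N]
    [Module R N] (x y : E) (m : M) (n : N) :
    P.pairingTmul M N ((x ⊗ₜ m) ⊗ₜ (y ⊗ₜ n)) = P x y • (m ⊗ₜ n) := by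
  simp [pairingTmul]

variable (M : Type*) [Semiring M] [Algebra R M]

def pairingMul : (E ⊗[R] M) ⊗[R] (E ⊗[R] M) →ₗ[R] M :=
  (TensorProduct.lid R M).toLinearMap ∘ₗ map (lift P) (mul' R M) ∘ₗ
    (tensorTensorTensorComm R E M E M).toLinearMap

variable {M}

@[simp]
theorem pairingMul_tmul (x y : E) (m n : M) :
    P.pairingMul M ((x ⊗ₜ m) ⊗ₜ (y ⊗ₜ n)) = P x y • (m * n) := by
  simp [pairingMul]

theorem map_pairingMul {N : Type*} [Semiring N] [Algebra R N] (f : M →ₐ[R] N)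
    (X Y : E ⊗[R] M) :
    f (P.pairingMul M (X ⊗ₜ Y)) =
      P.pairingMul N (f.toLinearMap.lTensor E X ⊗ₜ f.toLinearMap.lTensor E Y) := by
  suffices h : f.toLinearMap ∘ₗ P.pairingMul M =
      P.pairingMul N ∘ₗ map (f.toLinearMap.lTensor E) (f.toLinearMap.lTensor E) from
    congr($h (X ⊗ₜ Y))
  ext
  simp

end Pairing

section Bialgebra

open Coalgebra

variable {R A : Type*} [CommSemiring R] [Semiring A] [Bialgebra R A] (P : A →ₗ[R] A →ₗ[R] R)

def squareProduct : A →ₗ[R] A →ₗ[R] A :=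
  (curry (P.pairingMul A)).compl₁₂ comul comul

theorem squareProduct_apply (a b : A) :
    P.squareProduct a b = P.pairingMul A (comul a ⊗ₜ comul b) := rfl

theorem comul_squareProduct (a b : A) :
    comul (P.squareProduct a b) = P.pairingMul (A ⊗[R] A)
      (comul.lTensor A (comul a) ⊗ₜ comul.lTensor A (comul b)) :=
  P.map_pairingMul (Bialgebra.comulAlgHom R A) _ _

def tripleSquareProduct :
    (A ⊗[R] (A ⊗[R] A)) ⊗[R] ((A ⊗[R] (A ⊗[R] A)) ⊗[R] (A ⊗[R] (A ⊗[R] A))) →ₗ[R] A :=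
  P.pairingMul A ∘ₗ P.pairingTmul (A ⊗[R] A) (A ⊗[R] A) ∘ₗ
    rTensor _ (lTensor A (lTensor A (mul' R A) ∘ₗ (leftComm R A A A).toLinearMap) ∘ₗ
      (TensorProduct.assoc R A A (A ⊗[R] A)).toLinearMap ∘ₗ
      P.pairingTmul (A ⊗[R] A) (A ⊗[R] A)) ∘ₗ
    (TensorProduct.assoc R _ _ _).symm.toLinearMap

@[simp]
theorem tripleSquareProduct_tmul (a₁ a₂ a₃ b₁ b₂ b₃ c₁ c₂ c₃ : A) :
    P.tripleSquareProduct ((a₁ ⊗ₜ (a₂ ⊗ₜ a₃)) ⊗ₜ ((b₁ ⊗ₜ (b₂ ⊗ₜ b₃)) ⊗ₜ (c₁ ⊗ₜ (c₂ ⊗ₜ c₃)))) =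
      (P a₁ b₁ * P a₂ c₁ * P b₂ c₂) • (a₃ * b₃ * c₃) := by
  simp [tripleSquareProduct, smul_tmul', mul_comm, mul_left_comm]

theorem one_apply_mul_of_apply_mul
    (h : ∀ a b c, P a (b * c) = lift ((mul R R).compl₁₂ (P.flip b) (P.flip c)) (comul a))
    (x y : A) : P 1 (x * y) = P 1 x * P 1 y := by
  simp [h, Algebra.TensorProduct.one_def]

structure IsLaplacePairing : Prop where
  symm : ∀ a b, P a b = P b a
  apply_mul : ∀ a b c, P a (b * c) = lift ((mul R R).compl₁₂ (P.flip b) (P.flip c)) (comul a)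
  one_apply : ∀ a, P 1 a = counit a

namespace IsLaplacePairing

variable {P}

theorem apply_mul_left (hP : P.IsLaplacePairing) (a b c : A) :
    P (a * b) c = lift ((mul R R).compl₁₂ (P a) (P b)) (comul c) := by
  rw [hP.symm, hP.apply_mul]
  congr 1
  ext x y
  simp [hP.symm x a, hP.symm y b]

theorem pairingMul_pairingMul_left (hP : P.IsLaplacePairing) (X Y : A ⊗[R] (A ⊗[R] A))
    (W : A ⊗[R] A) :
    P.pairingMul A (P.pairingMul (A ⊗[R] A) (X ⊗ₜ Y) ⊗ₜ W) =
      P.tripleSquareProduct (X ⊗ₜ (Y ⊗ₜ TensorProduct.assoc R A A A (comul.rTensor A W))) := by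
  suffices h : P.pairingMul A ∘ₗ rTensor _ (P.pairingMul (A ⊗[R] A)) =
      P.tripleSquareProduct ∘ₗ (TensorProduct.assoc R _ _ _).toLinearMap ∘ₗ
        lTensor _ ((TensorProduct.assoc R A A A).toLinearMap ∘ₗ comul.rTensor A) from
    congr($h ((X ⊗ₜ Y) ⊗ₜ W))
  ext x₁ x₂ x₃ y₁ y₂ y₃ w₁ w₂
  simp only [AlgebraTensorModule.curry_apply, restrictScalars_self, curry_apply, coe_comp,
    Function.comp_apply, rTensor_tmul, lTensor_tmul, LinearEquiv.coe_coe, assoc_tmul,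
    pairingMul_tmul, Algebra.TensorProduct.tmul_mul_tmul, ← smul_tmul', map_smul,
    hP.apply_mul_left]
  induction comul (R := R) w₁ with
  | zero => simp
  | add V V' hV hV' => simp only [map_add, add_smul, smul_add, add_tmul, tmul_add, hV, hV']
  | tmul u v => simp [smul_smul, mul_assoc]

theorem pairingMul_pairingMul_right (hP : P.IsLaplacePairing) (W : A ⊗[R] A)
    (Y Z : A ⊗[R] (A ⊗[R] A)) :
    P.pairingMul A (W ⊗ₜ P.pairingMul (A ⊗[R] A) (Y ⊗ₜ Z)) =
      P.tripleSquareProduct (TensorProduct.assoc R A A A (comul.rTensor A W) ⊗ₜ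
        (leftComm R A A A Y ⊗ₜ leftComm R A A A Z)) := by
  suffices h : P.pairingMul A ∘ₗ lTensor _ (P.pairingMul (A ⊗[R] A)) =
      P.tripleSquareProduct ∘ₗ map ((TensorProduct.assoc R A A A).toLinearMap ∘ₗ comul.rTensor A)
        (map (leftComm R A A A).toLinearMap (leftComm R A A A).toLinearMap) from
    congr($h (W ⊗ₜ (Y ⊗ₜ Z)))
  ext w₁ w₂ y₁ y₂ y₃ z₁ z₂ z₃
  simp only [AlgebraTensorModule.curry_apply, restrictScalars_self, curry_apply, coe_comp,
    Function.comp_apply, lTensor_tmul, map_tmul, rTensor_tmul, LinearEquiv.coe_coe, leftComm_tmul, pairingMul_tmul, Algebra.TensorProduct.tmul_mul_tmul, tmul_smul, map_smul,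
    hP.apply_mul]
  induction comul (R := R) w₁ with
  | zero => simp
  | add V V' hV hV' => simp only [map_add, add_smul, smul_add, add_tmul, hV, hV']
  | tmul u v => simp [smul_smul, mul_assoc, mul_comm]

theorem squareProduct_one_left (hP : P.IsLaplacePairing) (a : A) : P.squareProduct 1 a = a := by
  have h : P.pairingMul A ∘ₗ TensorProduct.mk R _ _ (1 ⊗ₜ 1) =
      (TensorProduct.lid R A).toLinearMap ∘ₗ (P 1).rTensor A := by
    ext; simp
  rw [squareProduct_apply, Bialgebra.comul_one, Algebra.TensorProduct.one_def]
  simpa [show P 1 = counit from LinearMap.ext hP.one_apply] using congr($h (comul a))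

theorem squareProduct_one_right (hP : P.IsLaplacePairing) (a : A) : P.squareProduct a 1 = a := by
  have h : P.pairingMul A ∘ₗ (TensorProduct.mk R _ _).flip (1 ⊗ₜ 1) =
      (TensorProduct.lid R A).toLinearMap ∘ₗ (P.flip 1).rTensor A := by
    ext; simp
  rw [squareProduct_apply, Bialgebra.comul_one, Algebra.TensorProduct.one_def]
  simpa [show P.flip 1 = counit from LinearMap.ext fun a ↦ (hP.symm a 1).trans (hP.one_apply a)]
    using congr($h (comul a))

theorem squareProduct_assoc [IsCocomm R A] (hP : P.IsLaplacePairing) (a b c : A) :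
    P.squareProduct (P.squareProduct a b) c = P.squareProduct a (P.squareProduct b c) := by
  rw [squareProduct_apply, comul_squareProduct, hP.pairingMul_pairingMul_left, coassoc_apply,
    P.squareProduct_apply a, comul_squareProduct, hP.pairingMul_pairingMul_right, coassoc_apply,
    leftComm_lTensor_comul_comul, leftComm_lTensor_comul_comul]

end IsLaplacePairing

end Bialgebra

end LinearMap

theorem statement6 (Lp : JT K U V →ₗ[K] JT K U V →ₗ[K] K)
    (hLp : IsLaplacePairing K U V B Lp) :
    (∀ a b c : JT K U V,
      sqProd K U V Lp (sqProd K U V Lp a b) c = sqProd K U V Lp a (sqProd K U V Lp b c)) ∧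
    (∀ a : JT K U V, sqProd K U V Lp 1 a = a) ∧
    (∀ a : JT K U V, sqProd K U V Lp a 1 = a) := by
  have hP : Lp.IsLaplacePairing :=
    { symm := hLp.symm
      apply_mul := hLp.split
      one_apply := LinearMap.congr_fun <| TensorAlgebra.linearMap_tensorProduct_eq_counit (Lp 1)
        hLp.unit_unit (Lp.one_apply_mul_of_apply_mul hLp.split) hLp.one_u hLp.one_v }
  exact ⟨hP.squareProduct_assoc, hP.squareProduct_one_left, hP.squareProduct_one_right⟩

end
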